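/- arXiv:math/0702369 — 7 statements merged into one kernel-verified Lean document; each statement's English description precedes it below -/
import Mathlib

section
/- Let q, ℓ, m, n be natural numbers with m, n ≥ ℓ and m + n ≥ 2ℓ + 1. Let G be a bipartite graph with parts M and N of sizes m and n respectively. If G has no (ℓ+1)-connected subgraph on at least q vertices, then the number of edges of G satisfies e(G) ≤ q(n − ℓ)(m − ℓ)/(m + n − 2ℓ) + (ℓ² + ℓ)(m + n − 2ℓ). -/
/-!
Induct on `#A + #B` over pairs of disjoint vertex sets, bounding the number of `A`–`B` edges by
`edgeBound q ℓ #A #B`, i.e. `q · xy/(x + y) + (ℓ² + ℓ)(x + y)` with `x = #A - ℓ`, `y = #B - ℓ`.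
Since the bound grows by at least `ℓ` when a side grows by one vertex, a vertex with at most `ℓ`
neighbours on the other side can be deleted. Otherwise every vertex has more than `ℓ` such
neighbours. If `G[A ∪ B]` is `(ℓ+1)`-connected, then `#A + #B < q` and the trivial bound `#A · #B`
suffices. If not, it has a separation `(X, Y)` of order at most `ℓ`; every edge lies in `X` or in
`Y`, the degree condition forces both sides to keep more than `ℓ` vertices of `A` and of `B`, and
the bound is superadditive because the parallel sum `xy/(x + y)` is.
-/

/-- A graph `G` is `k`-connected if it has at least `k+1` vertices and removing any
set of at most `k-1` vertices leaves a connected graph. -/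
def IsKConnected (k : ℕ) {V : Type*} (G : SimpleGraph V) : Prop :=
  k + 1 ≤ Nat.card V ∧
  ∀ S : Set V, Nat.card S ≤ k - 1 → (G.induce Sᶜ).Connected

open Finset

noncomputable def parallelSum (x y : ℝ) : ℝ := x * y / (x + y)

theorem parallelSum_comm (x y : ℝ) : parallelSum x y = parallelSum y x := by
  rw [parallelSum, parallelSum, mul_comm, add_comm]

theorem parallelSum_nonneg {x y : ℝ} (hx : 0 ≤ x) (hy : 0 ≤ y) : 0 ≤ parallelSum x y := by
  unfold parallelSum; positivity

theorem add_mul_parallelSum {x y : ℝ} (h : x + y ≠ 0) : (x + y) * parallelSum x y = x * y :=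
  mul_div_cancel₀ _ h

theorem parallelSum_mono_left {x x' y : ℝ} (hx : 0 ≤ x) (hy : 0 ≤ y) (hxx' : x ≤ x') :
    parallelSum x y ≤ parallelSum x' y := by
  rcases (add_nonneg hx hy).eq_or_lt with h | h
  · rw [parallelSum, ← h, div_zero]
    exact parallelSum_nonneg (hx.trans hxx') hy
  · unfold parallelSum
    rw [div_le_div_iff₀ h (by linarith)]
    nlinarith [mul_nonneg (mul_nonneg hy hy) (sub_nonneg.2 hxx')]

theorem parallelSum_mono {x x' y y' : ℝ} (hx : 0 ≤ x) (hy : 0 ≤ y) (hxx' : x ≤ x')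
    (hyy' : y ≤ y') : parallelSum x y ≤ parallelSum x' y' :=
  calc parallelSum x y ≤ parallelSum x' y := parallelSum_mono_left hx hy hxx'
    _ = parallelSum y x' := parallelSum_comm _ _
    _ ≤ parallelSum y' x' := parallelSum_mono_left hy (hx.trans hxx') hyy'
    _ = parallelSum x' y' := parallelSum_comm _ _

theorem parallelSum_add_parallelSum_le {x₁ y₁ x₂ y₂ : ℝ} (hx₁ : 0 ≤ x₁) (hy₁ : 0 ≤ y₁)
    (hx₂ : 0 ≤ x₂) (hy₂ : 0 ≤ y₂) :
    parallelSum x₁ y₁ + parallelSum x₂ y₂ ≤ parallelSum (x₁ + x₂) (y₁ + y₂) := by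
  rcases (add_nonneg hx₁ hy₁).eq_or_lt with h₁ | h₁
  · obtain ⟨rfl, rfl⟩ := (add_eq_zero_iff_of_nonneg hx₁ hy₁).1 h₁.symm
    simp [parallelSum]
  rcases (add_nonneg hx₂ hy₂).eq_or_lt with h₂ | h₂
  · obtain ⟨rfl, rfl⟩ := (add_eq_zero_iff_of_nonneg hx₂ hy₂).1 h₂.symm
    simp [parallelSum]
  unfold parallelSum
  rw [div_add_div _ _ h₁.ne' h₂.ne', div_le_div_iff₀ (by positivity) (by linarith)]
  nlinarith [sq_nonneg (x₁ * y₂ - x₂ * y₁), mul_nonneg (mul_nonneg hx₁ hy₁) hx₂]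

noncomputable def edgeBound (q ℓ m n : ℕ) : ℝ :=
  q * parallelSum ((m : ℝ) - ℓ) ((n : ℝ) - ℓ) + ((ℓ : ℝ) ^ 2 + ℓ) * (((m : ℝ) - ℓ) + ((n : ℝ) - ℓ))

section edgeBound

variable {q ℓ m n m₁ n₁ m₂ n₂ : ℕ}

theorem edgeBound_eq (q ℓ m n : ℕ) : edgeBound q ℓ m n =
    (q : ℝ) * ((n : ℝ) - ℓ) * ((m : ℝ) - ℓ) / ((m : ℝ) + (n : ℝ) - 2 * ℓ)
      + ((ℓ : ℝ) ^ 2 + ℓ) * ((m : ℝ) + (n : ℝ) - 2 * ℓ) := by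
  unfold edgeBound parallelSum; ring_nf

theorem edgeBound_comm (q ℓ m n : ℕ) : edgeBound q ℓ m n = edgeBound q ℓ n m := by
  rw [edgeBound, edgeBound, parallelSum_comm, add_comm (_ - _)]

theorem edgeBound_add_le_succ_left (hm : ℓ ≤ m) (hn : ℓ ≤ n) :
    edgeBound q ℓ m n + ℓ ≤ edgeBound q ℓ (m + 1) n := by
  have hx : (0 : ℝ) ≤ m - ℓ := sub_nonneg.2 (by exact_mod_cast hm)
  have hy : (0 : ℝ) ≤ n - ℓ := sub_nonneg.2 (by exact_mod_cast hn)
  have hps := parallelSum_mono_left (x' := (m : ℝ) + 1 - ℓ) hx hy (by linarith)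
  unfold edgeBound
  push_cast
  nlinarith [mul_le_mul_of_nonneg_left hps (Nat.cast_nonneg (α := ℝ) q), sq_nonneg (ℓ : ℝ)]

theorem mul_le_edgeBound_of_eq_left (hm : m = ℓ) (hn : ℓ < n) :
    (m * n : ℝ) ≤ edgeBound q ℓ m n := by
  subst hm
  have hy : (1 : ℝ) ≤ n - m := by linarith [(by exact_mod_cast hn : (m : ℝ) + 1 ≤ n)]
  unfold edgeBound
  rw [sub_self, parallelSum, zero_mul, zero_div, mul_zero, zero_add, zero_add]
  nlinarith [mul_le_mul_of_nonneg_left hy (sq_nonneg (m : ℝ))]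

theorem mul_le_edgeBound (hm : ℓ ≤ m) (hn : ℓ ≤ n) (hmn : 2 * ℓ < m + n) (hq : m + n ≤ q) :
    (m * n : ℝ) ≤ edgeBound q ℓ m n := by
  have hx : (0 : ℝ) ≤ m - ℓ := sub_nonneg.2 (by exact_mod_cast hm)
  have hy : (0 : ℝ) ≤ n - ℓ := sub_nonneg.2 (by exact_mod_cast hn)
  have hxy : (1 : ℝ) ≤ (m - ℓ) + (n - ℓ) := by
    linarith [(by exact_mod_cast hmn : 2 * (ℓ : ℝ) + 1 ≤ m + n)]
  have hqxy : (m - ℓ) + (n - ℓ) ≤ (q : ℝ) := by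
    linarith [(by exact_mod_cast hq : (m : ℝ) + n ≤ q), (Nat.cast_nonneg ℓ : (0 : ℝ) ≤ ℓ)]
  have hps := add_mul_parallelSum (x := (m : ℝ) - ℓ) (y := (n : ℝ) - ℓ) (by linarith)
  have hq_ps := mul_le_mul_of_nonneg_right hqxy (parallelSum_nonneg hx hy)
  unfold edgeBound
  nlinarith [mul_le_mul_of_nonneg_left hxy (sq_nonneg (ℓ : ℝ))]

theorem edgeBound_add_edgeBound_le (hm₁ : ℓ ≤ m₁) (hn₁ : ℓ ≤ n₁) (hm₂ : ℓ ≤ m₂) (hn₂ : ℓ ≤ n₂)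
    (hm : m₁ + m₂ ≤ m + ℓ) (hn : n₁ + n₂ ≤ n + ℓ) :
    edgeBound q ℓ m₁ n₁ + edgeBound q ℓ m₂ n₂ ≤ edgeBound q ℓ m n := by
  have hx₁ : (0 : ℝ) ≤ m₁ - ℓ := sub_nonneg.2 (by exact_mod_cast hm₁)
  have hy₁ : (0 : ℝ) ≤ n₁ - ℓ := sub_nonneg.2 (by exact_mod_cast hn₁)
  have hx₂ : (0 : ℝ) ≤ m₂ - ℓ := sub_nonneg.2 (by exact_mod_cast hm₂)
  have hy₂ : (0 : ℝ) ≤ n₂ - ℓ := sub_nonneg.2 (by exact_mod_cast hn₂)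
  have hx : ((m₁ : ℝ) - ℓ) + (m₂ - ℓ) ≤ m - ℓ := by
    linarith [(by exact_mod_cast hm : (m₁ : ℝ) + m₂ ≤ m + ℓ)]
  have hy : ((n₁ : ℝ) - ℓ) + (n₂ - ℓ) ≤ n - ℓ := by
    linarith [(by exact_mod_cast hn : (n₁ : ℝ) + n₂ ≤ n + ℓ)]
  have hps := (parallelSum_add_parallelSum_le hx₁ hy₁ hx₂ hy₂).trans
    (parallelSum_mono (add_nonneg hx₁ hx₂) (add_nonneg hy₁ hy₂) hx hy)
  unfold edgeBound
  nlinarith [mul_le_mul_of_nonneg_left hps (Nat.cast_nonneg (α := ℝ) q),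
    mul_le_mul_of_nonneg_left (add_le_add hx hy) (by positivity : (0 : ℝ) ≤ (ℓ : ℝ) ^ 2 + ℓ)]

end edgeBound

theorem Finset.card_inter_add_card_inter_le {α : Type*} [DecidableEq α] (A X Y : Finset α) :
    #(A ∩ X) + #(A ∩ Y) ≤ #A + #(X ∩ Y) := by
  rw [← card_union_add_card_inter]
  exact add_le_add (card_le_card (union_subset inter_subset_left inter_subset_left))
    (card_le_card fun v hv ↦ by simp only [mem_inter] at hv ⊢; tauto)

namespace SimpleGraph

variable {V : Type*} {G : SimpleGraph V}

theorem card_interedges_eq_sum [DecidableRel G.Adj] (A B : Finset V) :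
    #(G.interedges A B) = ∑ a ∈ A, #{b ∈ B | G.Adj a b} := by
  simp only [interedges_def, card_filter, sum_product]

theorem card_interedges_comm [DecidableRel G.Adj] (A B : Finset V) :
    #(G.interedges A B) = #(G.interedges B A) :=
  have := G.symm
  Rel.card_interedges_comm A B

theorem IsBipartiteWith.card_edgeFinset_eq_card_interedges [Fintype V] [DecidableRel G.Adj]
    {M N : Finset V} (h : G.IsBipartiteWith M N) : #G.edgeFinset = #(G.interedges M N) := by
  rw [← isBipartiteWith_sum_degrees_eq_card_edges h, card_interedges_eq_sum]
  exact sum_congr rfl fun v hv ↦ by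
    rw [← card_neighborFinset_eq_degree, isBipartiteWith_neighborFinset h hv]

variable [DecidableEq V]

/-- A proper separation of `G[W]` in the sense of Diestel; its order is `#(X ∩ Y)`. -/
structure IsSeparation (G : SimpleGraph V) (W X Y : Finset V) : Prop where
  union_eq : X ∪ Y = W
  sdiff_nonempty_left : (X \ Y).Nonempty
  sdiff_nonempty_right : (Y \ X).Nonempty
  not_adj ⦃u v : V⦄ : u ∈ X \ Y → v ∈ Y \ X → ¬ G.Adj u v

namespace IsSeparation

variable {W X Y : Finset V} {u v : V}

theorem symm (h : G.IsSeparation W X Y) : G.IsSeparation W Y X where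
  union_eq := union_comm X Y ▸ h.union_eq
  sdiff_nonempty_left := h.sdiff_nonempty_right
  sdiff_nonempty_right := h.sdiff_nonempty_left
  not_adj _ _ hu hv huv := h.not_adj hv hu huv.symm

theorem left_subset (h : G.IsSeparation W X Y) : X ⊆ W :=
  h.union_eq ▸ subset_union_left

theorem card_left_lt (h : G.IsSeparation W X Y) : #X < #W := by
  obtain ⟨y, hy⟩ := h.sdiff_nonempty_right
  refine card_lt_card (Finset.ssubset_iff_subset_ne.2 ⟨h.left_subset, ?_⟩)
  rintro rfl
  exact (mem_sdiff.1 hy).2 (h.symm.left_subset (mem_sdiff.1 hy).1)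

theorem mem_left_of_adj (h : G.IsSeparation W X Y) (hu : u ∈ X \ Y) (hv : v ∈ W)
    (huv : G.Adj u v) : v ∈ X := by
  by_contra hvX
  have hvY : v ∈ Y := (mem_union.1 (h.union_eq ▸ hv)).resolve_left hvX
  exact h.not_adj hu (mem_sdiff.2 ⟨hvY, hvX⟩) huv

theorem adj_mem (h : G.IsSeparation W X Y) (hu : u ∈ W) (hv : v ∈ W) (huv : G.Adj u v) :
    (u ∈ X ∧ v ∈ X) ∨ (u ∈ Y ∧ v ∈ Y) := by
  by_cases huY : u ∈ Y
  · by_cases huX : u ∈ X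
    · rcases mem_union.1 (h.union_eq ▸ hv) with hvX | hvY
      exacts [.inl ⟨huX, hvX⟩, .inr ⟨huY, hvY⟩]
    · exact .inr ⟨huY, h.symm.mem_left_of_adj (mem_sdiff.2 ⟨huY, huX⟩) hv huv⟩
  · have huX : u ∈ X := (mem_union.1 (h.union_eq ▸ hu)).resolve_right huY
    exact .inl ⟨huX, h.mem_left_of_adj (mem_sdiff.2 ⟨huX, huY⟩) hv huv⟩

theorem card_inter_add_card_inter_lt {A B : Finset V} (hAB : Disjoint A B)
    (h : G.IsSeparation (A ∪ B) X Y) : #(A ∩ X) + #(B ∩ X) < #A + #B := by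
  rw [← card_union_of_disjoint (hAB.mono inter_subset_left inter_subset_left),
    ← card_union_of_disjoint hAB, ← union_inter_distrib_right]
  exact (card_le_card inter_subset_right).trans_lt h.card_left_lt

variable [DecidableRel G.Adj]

theorem card_interedges_le (h : G.IsSeparation W X Y) {A B : Finset V} (hA : A ⊆ W)
    (hB : B ⊆ W) : #(G.interedges A B) ≤
      #(G.interedges (A ∩ X) (B ∩ X)) + #(G.interedges (A ∩ Y) (B ∩ Y)) := by
  refine (card_le_card fun e he ↦ ?_).trans (card_union_le _ _)
  obtain ⟨heA, heB, hadj⟩ := G.mem_interedges_iff.1 he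
  rw [mem_union, G.mem_interedges_iff, G.mem_interedges_iff, mem_inter, mem_inter, mem_inter,
    mem_inter]
  rcases h.adj_mem (hA heA) (hB heB) hadj with ⟨h₁, h₂⟩ | ⟨h₁, h₂⟩
  exacts [.inl ⟨⟨heA, h₁⟩, ⟨heB, h₂⟩, hadj⟩, .inr ⟨⟨heA, h₁⟩, ⟨heB, h₂⟩, hadj⟩]

theorem filter_adj_subset (h : G.IsSeparation W X Y) (hu : u ∈ X \ Y) {T : Finset V}
    (hT : T ⊆ W) : {v ∈ T | G.Adj u v} ⊆ T ∩ X := fun _ hv ↦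
  have hv := mem_filter.1 hv
  mem_inter.2 ⟨hv.1, h.mem_left_of_adj hu (hT hv.1) hv.2⟩

theorem lt_card_inter_left_of_mem {A B : Finset V} {k : ℕ} (h : G.IsSeparation (A ∪ B) X Y)
    (hXY : #(X ∩ Y) ≤ k) (hdegA : ∀ a ∈ A, k < #{b ∈ B | G.Adj a b})
    (hdegB : ∀ b ∈ B, k < #{a ∈ A | G.Adj b a}) {a : V} (ha : a ∈ A) (haXY : a ∈ X \ Y) :
    k < #(A ∩ X) ∧ k < #(B ∩ X) := by
  have hBX : k < #(B ∩ X) :=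
    (hdegA a ha).trans_le (card_le_card (h.filter_adj_subset haXY subset_union_right))
  -- at most `k` vertices of `B ∩ X` lie in `X ∩ Y`, so one of them lies in `X \ Y`
  obtain ⟨b, hb, hbXY⟩ : ∃ b ∈ B, b ∈ X \ Y := by
    by_contra! hne
    have : B ∩ X ⊆ X ∩ Y := fun b hb ↦ by
      have := hne b (mem_inter.1 hb).1
      simp only [mem_inter, mem_sdiff] at hb this ⊢
      tauto
    exact absurd (card_le_card this) (by omega)
  exact ⟨(hdegB b hb).trans_le (card_le_card (h.filter_adj_subset hbXY subset_union_left)), hBX⟩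

theorem lt_card_inter_left {A B : Finset V} {k : ℕ} (h : G.IsSeparation (A ∪ B) X Y)
    (hXY : #(X ∩ Y) ≤ k) (hdegA : ∀ a ∈ A, k < #{b ∈ B | G.Adj a b})
    (hdegB : ∀ b ∈ B, k < #{a ∈ A | G.Adj b a}) : k < #(A ∩ X) ∧ k < #(B ∩ X) := by
  obtain ⟨w, hw⟩ := h.sdiff_nonempty_left
  rcases mem_union.1 (h.left_subset (mem_sdiff.1 hw).1) with hwA | hwB
  · exact h.lt_card_inter_left_of_mem hXY hdegA hdegB hwA hw
  · exact ((union_comm A B ▸ h).lt_card_inter_left_of_mem hXY hdegB hdegA hwB hw).symm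

end IsSeparation

theorem exists_isSeparation_of_not_preconnected {W S : Finset V}
    (h : ¬ (G.induce (↑(W \ S) : Set V)).Preconnected) :
    ∃ X Y, G.IsSeparation W X Y ∧ X ∩ Y ⊆ S := by
  classical
  simp only [Preconnected, not_forall] at h
  obtain ⟨x, y, hxy⟩ := h
  -- `C` is the component of `x` in `G[W \ S]`; the two sides below share only `W ∩ S`
  let C : Finset V := {v ∈ W \ S | ∃ hv : v ∈ W \ S, (G.induce _).Reachable x ⟨v, hv⟩}
  have hC : C ⊆ W \ S := filter_subset _ _
  have hx : x.1 ∈ C := mem_filter.2 ⟨x.2, x.2, .rfl⟩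
  have hy : y.1 ∉ C := fun hy ↦ hxy (by obtain ⟨_, _, h⟩ := mem_filter.1 hy; exact h)
  refine ⟨W \ ((W \ S) \ C), W \ C, ⟨?_, ⟨x, ?_⟩, ⟨y, ?_⟩, ?_⟩, ?_⟩
  · ext v
    have := @hC v
    simp only [mem_union, mem_sdiff] at this ⊢
    tauto
  · have := hC hx
    simp only [mem_sdiff] at this ⊢
    tauto
  · have := y.2
    simp only [mem_coe, mem_sdiff] at this ⊢
    tauto
  · intro u v hu hv huv
    have hu : u ∈ C := by
      have := @hC u
      simp only [mem_sdiff] at this hu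
      tauto
    obtain ⟨hvW, hvC⟩ : v ∈ W \ S ∧ v ∉ C := by
      simp only [mem_sdiff] at hv ⊢
      tauto
    obtain ⟨_, _, hxu⟩ := mem_filter.1 hu
    exact hvC (mem_filter.2 ⟨hvW, hvW, hxu.trans (induce_adj.2 huv).reachable⟩)
  · intro v hv
    simp only [mem_inter, mem_sdiff] at hv
    tauto

theorem exists_not_preconnected_of_not_isKConnected {k : ℕ} {W : Finset V} (hW : k + 1 ≤ #W)
    (h : ¬ IsKConnected k ((⊤ : G.Subgraph).induce (W : Set V)).coe) :
    ∃ S : Finset V, #S ≤ k - 1 ∧ ¬ (G.induce (↑(W \ S) : Set V)).Preconnected := by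
  set H := (⊤ : G.Subgraph).induce (W : Set V)
  have hcard : Nat.card H.verts = #W := by simp [H]
  simp only [IsKConnected, hcard, hW, true_and, not_forall] at h
  obtain ⟨S, hS, hconn⟩ := h
  have hfin : (Subtype.val '' S).Finite :=
    W.finite_toSet.subset (by rintro _ ⟨v, -, rfl⟩; exact v.2)
  refine ⟨hfin.toFinset, ?_, fun hpre ↦ hconn ?_⟩
  · rwa [← Set.ncard_eq_toFinset_card _ hfin, Set.ncard_image_of_injective _ Subtype.val_injective,
      ← Nat.card_coe_set_eq]
  · let f : G.induce ↑(W \ hfin.toFinset) →g H.coe.induce Sᶜ :=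
      { toFun v := ⟨⟨v.1, (mem_sdiff.1 v.2).1⟩,
          fun hv ↦ (mem_sdiff.1 v.2).2 (hfin.mem_toFinset.2 ⟨_, hv, rfl⟩)⟩
        map_rel' {u v} huv := show H.Adj u v from ⟨(mem_sdiff.1 u.2).1, (mem_sdiff.1 v.2).1, huv⟩ }
    have hf : Function.Surjective f := by
      rintro ⟨⟨v, hvW⟩, hvS⟩
      refine ⟨⟨v, mem_sdiff.2 ⟨hvW, fun hv ↦ ?_⟩⟩, rfl⟩
      obtain ⟨w, hw, rfl⟩ := hfin.mem_toFinset.1 hv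
      exact hvS hw
    have : Nonempty (Sᶜ : Set H.verts) := by
      by_contra hne
      rw [not_nonempty_iff, Set.isEmpty_coe_sort, Set.compl_empty_iff] at hne
      rw [hne, Nat.card_univ, hcard] at hS
      omega
    exact ⟨hpre.map f hf⟩

theorem exists_isSeparation_of_not_isKConnected {k : ℕ} {W : Finset V} (hW : k + 1 ≤ #W)
    (h : ¬ IsKConnected k ((⊤ : G.Subgraph).induce (W : Set V)).coe) :
    ∃ X Y, G.IsSeparation W X Y ∧ #(X ∩ Y) ≤ k - 1 := by
  obtain ⟨S, hS, hpre⟩ := exists_not_preconnected_of_not_isKConnected hW h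
  obtain ⟨X, Y, hsep, hXY⟩ := exists_isSeparation_of_not_preconnected hpre
  exact ⟨X, Y, hsep, (card_le_card hXY).trans hS⟩

variable [DecidableRel G.Adj]

section EdgeBound

variable {q ℓ : ℕ} {A B : Finset V}

theorem card_interedges_le_edgeBound_of_erase {a : V} (ha : a ∈ A)
    (hdeg : #{b ∈ B | G.Adj a b} ≤ ℓ) (hA : ℓ < #A) (hB : ℓ ≤ #B)
    (ih : (#(G.interedges (A.erase a) B) : ℝ) ≤ edgeBound q ℓ #(A.erase a) #B) :
    (#(G.interedges A B) : ℝ) ≤ edgeBound q ℓ #A #B := by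
  have hcount : #(G.interedges A B) = #(G.interedges (A.erase a) B) + #{b ∈ B | G.Adj a b} := by
    rw [card_interedges_eq_sum, card_interedges_eq_sum, sum_erase_add _ _ ha]
  have hstep := edgeBound_add_le_succ_left (q := q) (m := #(A.erase a)) (n := #B)
    (by rw [card_erase_of_mem ha]; omega) hB
  rw [card_erase_add_one ha] at hstep
  calc (#(G.interedges A B) : ℝ)
      ≤ #(G.interedges (A.erase a) B) + ℓ := by rw [hcount]; push_cast; gcongr
    _ ≤ edgeBound q ℓ #(A.erase a) #B + ℓ := by gcongr
    _ ≤ edgeBound q ℓ #A #B := hstep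

theorem card_interedges_le_edgeBound_of_isSeparation {X Y : Finset V} (hAB : Disjoint A B)
    (h : G.IsSeparation (A ∪ B) X Y) (hXY : #(X ∩ Y) ≤ ℓ)
    (hdegA : ∀ a ∈ A, ℓ < #{b ∈ B | G.Adj a b}) (hdegB : ∀ b ∈ B, ℓ < #{a ∈ A | G.Adj b a})
    (ih : ∀ A' B' : Finset V, Disjoint A' B' → ℓ < #A' → ℓ < #B' → #A' + #B' < #A + #B →
      (#(G.interedges A' B') : ℝ) ≤ edgeBound q ℓ #A' #B') :
    (#(G.interedges A B) : ℝ) ≤ edgeBound q ℓ #A #B := by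
  have hdisj (Z : Finset V) : Disjoint (A ∩ Z) (B ∩ Z) :=
    hAB.mono inter_subset_left inter_subset_left
  obtain ⟨hAX, hBX⟩ := h.lt_card_inter_left hXY hdegA hdegB
  obtain ⟨hAY, hBY⟩ := h.symm.lt_card_inter_left (by rwa [inter_comm]) hdegA hdegB
  have hA := card_inter_add_card_inter_le A X Y
  have hB := card_inter_add_card_inter_le B X Y
  calc (#(G.interedges A B) : ℝ)
      ≤ #(G.interedges (A ∩ X) (B ∩ X)) + #(G.interedges (A ∩ Y) (B ∩ Y)) := by
        exact_mod_cast h.card_interedges_le subset_union_left subset_union_right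
    _ ≤ edgeBound q ℓ #(A ∩ X) #(B ∩ X) + edgeBound q ℓ #(A ∩ Y) #(B ∩ Y) :=
        add_le_add (ih _ _ (hdisj X) hAX hBX (h.card_inter_add_card_inter_lt hAB))
          (ih _ _ (hdisj Y) hAY hBY (h.symm.card_inter_add_card_inter_lt hAB))
    _ ≤ edgeBound q ℓ #A #B :=
        edgeBound_add_edgeBound_le hAX.le hBX.le hAY.le hBY.le (by omega) (by omega)

theorem card_interedges_le_edgeBound
    (hno : ∀ H : G.Subgraph, IsKConnected (ℓ + 1) H.coe → Nat.card H.verts < q)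
    (hAB : Disjoint A B) (hA : ℓ ≤ #A) (hB : ℓ ≤ #B) (hAB' : 2 * ℓ < #A + #B) :
    (#(G.interedges A B) : ℝ) ≤ edgeBound q ℓ #A #B := by
  induction hs : #A + #B using Nat.strong_induction_on generalizing A B with
  | _ s ih =>
  subst hs
  have ih' (A' B' : Finset V) (hAB : Disjoint A' B') (hA : ℓ ≤ #A') (hB : ℓ ≤ #B')
      (hAB' : 2 * ℓ < #A' + #B') (hlt : #A' + #B' < #A + #B) :=
    ih _ hlt hAB hA hB hAB' rfl
  have hmul : (#(G.interedges A B) : ℝ) ≤ #A * #B := by exact_mod_cast card_interedges_le_mul ..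
  rcases hA.eq_or_lt with hA | hA
  · exact hmul.trans (mul_le_edgeBound_of_eq_left hA.symm (by omega))
  rcases hB.eq_or_lt with hB | hB
  · rw [mul_comm, edgeBound_comm] at *
    exact hmul.trans (mul_le_edgeBound_of_eq_left hB.symm (by omega))
  by_cases hlowA : ∃ a ∈ A, #{b ∈ B | G.Adj a b} ≤ ℓ
  · obtain ⟨a, ha, hdeg⟩ := hlowA
    have := card_erase_of_mem ha
    exact card_interedges_le_edgeBound_of_erase ha hdeg hA hB.le
      (ih' _ _ (hAB.mono_left (erase_subset a A)) (by omega) hB.le (by omega) (by omega))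
  by_cases hlowB : ∃ b ∈ B, #{a ∈ A | G.Adj b a} ≤ ℓ
  · obtain ⟨b, hb, hdeg⟩ := hlowB
    have := card_erase_of_mem hb
    rw [card_interedges_comm, edgeBound_comm]
    refine card_interedges_le_edgeBound_of_erase hb hdeg hB hA.le ?_
    rw [card_interedges_comm, edgeBound_comm]
    exact ih' _ _ (hAB.mono_right (erase_subset b B)) hA.le (by omega) (by omega) (by omega)
  push Not at hlowA hlowB
  have hcard : #(A ∪ B) = #A + #B := card_union_of_disjoint hAB
  by_cases hconn : IsKConnected (ℓ + 1) ((⊤ : G.Subgraph).induce (↑(A ∪ B) : Set V)).coe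
  · have hq := hno _ hconn
    simp only [Subgraph.induce_verts, Nat.card_coe_set_eq, Set.ncard_coe_finset, hcard] at hq
    exact hmul.trans (mul_le_edgeBound hA.le hB.le hAB' hq.le)
  obtain ⟨X, Y, hsep, hXY⟩ := exists_isSeparation_of_not_isKConnected (by omega) hconn
  exact card_interedges_le_edgeBound_of_isSeparation hAB hsep hXY hlowA hlowB
    fun A' B' hAB hA hB hlt ↦ ih' A' B' hAB hA.le hB.le (by omega) hlt

end EdgeBound

end SimpleGraph

theorem stmt_0_general {V : Type*} [Fintype V] [DecidableEq V] (q ℓ : ℕ) (G : SimpleGraph V)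
    (M N : Finset V) (hdisj : Disjoint M N)
    (hbip : ∀ u v, G.Adj u v → (u ∈ M ∧ v ∈ N) ∨ (u ∈ N ∧ v ∈ M))
    (hm : ℓ ≤ M.card) (hn : ℓ ≤ N.card)
    (hmn : 2 * ℓ + 1 ≤ M.card + N.card)
    (hno : ∀ H : G.Subgraph, IsKConnected (ℓ + 1) H.coe → Nat.card H.verts < q) :
    (Nat.card G.edgeSet : ℝ) ≤
      (q : ℝ) * ((N.card : ℝ) - ℓ) * ((M.card : ℝ) - ℓ) /
          ((M.card : ℝ) + (N.card : ℝ) - 2 * ℓ)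
        + ((ℓ : ℝ) ^ 2 + ℓ) * ((M.card : ℝ) + (N.card : ℝ) - 2 * ℓ) := by
  classical
  have hMN : G.IsBipartiteWith M N := ⟨Finset.disjoint_coe.2 hdisj, hbip⟩
  rw [Nat.card_eq_fintype_card, ← G.edgeFinset_card, hMN.card_edgeFinset_eq_card_interedges,
    ← edgeBound_eq]
  exact G.card_interedges_le_edgeBound hno hdisj hm hn hmn

theorem stmt_0 {V : Type*} [Fintype V] [DecidableEq V] (q ℓ : ℕ) (G : SimpleGraph V)
    (M N : Finset V) (hpart : M ∪ N = Finset.univ) (hdisj : Disjoint M N)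
    (hbip : ∀ u v, G.Adj u v → (u ∈ M ∧ v ∈ N) ∨ (u ∈ N ∧ v ∈ M))
    (hm : ℓ ≤ M.card) (hn : ℓ ≤ N.card)
    (hmn : 2 * ℓ + 1 ≤ M.card + N.card)
    (hno : ∀ H : G.Subgraph, IsKConnected (ℓ + 1) H.coe → Nat.card H.verts < q) :
    (Nat.card G.edgeSet : ℝ) ≤
      (q : ℝ) * ((N.card : ℝ) - ℓ) * ((M.card : ℝ) - ℓ) /
          ((M.card : ℝ) + (N.card : ℝ) - 2 * ℓ)
        + ((ℓ : ℝ) ^ 2 + ℓ) * ((M.card : ℝ) + (N.card : ℝ) - 2 * ℓ) :=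
  stmt_0_general q ℓ G M N hdisj hbip hm hn hmn hno
end

section
/- For all natural numbers n, r, s, k with n ≥ 2 there exists an r-colouring f of E(K_n) such that every 1-connected (i.e., connected) subgraph of K_n using at most s colours under f has at most 2^s · ⌈n / 2^{⌊log₂(r+1)⌋}⌉ vertices. In particular, m(n,r,s,k) ≤ m(n,r,s,1) ≤ 2^s ⌈n / 2^{⌊log₂(r+1)⌋}⌉ < 2^s ⌈2n/(r+1)⌉. -/
/-!
Put `t = ⌊log₂ (r + 1)⌋`. Split the vertices into `2 ^ t` blocks of at most `⌈n / 2 ^ t⌉` vertices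
and label the blocks injectively by the vectors of `𝔽₂ ^ t`. Since `2 ^ t - 1 ≤ r`, the nonzero
vectors can receive pairwise distinct colours; colour the edge `uv` by the colour of
`label u + label v`. Along an edge whose colour lies in `C`, the label changes by zero or by one of
the at most `#C` nonzero vectors of a colour in `C`. Hence the labels of a connected subgraph
coloured from `C` lie in a coset of a subspace spanned by at most `#C` vectors, so they meet at most
`2 ^ #C` blocks.
-/

open Finset

theorem SimpleGraph.Walk.sub_mem_of_forall_adj {V G : Type*} [AddGroup G] {Γ : SimpleGraph V}
    {K : AddSubgroup G} {L : V → G} (hK : ∀ u v, Γ.Adj u v → L u - L v ∈ K) {a b : V}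
    (p : Γ.Walk a b) : L a - L b ∈ K := by
  induction p with
  | nil => simp
  | cons h _ ih =>
    have := K.add_mem (hK _ _ h) ih
    rwa [sub_add_sub_cancel] at this

theorem SimpleGraph.Subgraph.Connected.sub_mem_of_forall_adj {V G : Type*} [AddGroup G]
    {Γ : SimpleGraph V} {H : Γ.Subgraph} (hH : H.Connected) {K : AddSubgroup G} {L : V → G}
    (hK : ∀ u v, H.Adj u v → L u - L v ∈ K) {a b : V} (ha : a ∈ H.verts) (hb : b ∈ H.verts) :
    L a - L b ∈ K := by
  obtain ⟨p⟩ := hH.coe.preconnected ⟨a, ha⟩ ⟨b, hb⟩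
  exact p.sub_mem_of_forall_adj (L := L ∘ Subtype.val) fun u v huv => hK u v huv

theorem Submodule.card_span_finset_le {R M : Type*} [Semiring R] [AddCommMonoid M] [Module R M]
    [Finite R] (W : Finset M) : Nat.card (span R (W : Set M)) ≤ Nat.card R ^ #W := by
  have hsurj : Function.Surjective fun c : W → R =>
      (⟨∑ w, c w • (w : M), sum_mem fun w _ => smul_mem _ _ (subset_span w.2)⟩ :
        span R (W : Set M)) := by
    rintro ⟨x, hx⟩
    obtain ⟨c, -, rfl⟩ := mem_span_finset.1 hx
    exact ⟨fun w => c w, Subtype.ext (W.sum_coe_sort fun w => c w • w)⟩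
  simpa [Nat.card_fun] using Nat.card_le_card_of_surjective _ hsurj

theorem Fintype.exists_injOn_compl_singleton {α β : Type*} [Fintype α] [Fintype β] [Nonempty β]
    (a : α) (h : Fintype.card α ≤ Fintype.card β + 1) : ∃ c : α → β, Set.InjOn c {a}ᶜ := by
  classical
  have : Fintype.card {x // x ≠ a} ≤ Fintype.card β := by
    rw [Fintype.card_subtype_compl, Fintype.card_subtype_eq]; omega
  obtain ⟨e⟩ := Function.Embedding.nonempty_of_card_le this
  refine ⟨fun x => if hx : x = a then Classical.arbitrary β else e ⟨x, hx⟩, fun x hx y hy hxy => ?_⟩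
  simp only [Set.mem_compl_singleton_iff] at hx hy
  simpa [dif_neg hx, dif_neg hy] using hxy

theorem Nat.card_le_card_mul_of_sub_mem {α G β : Type*} [AddGroup G] [Finite β]
    (φ : α ↪ G × β) (K : AddSubgroup G) [Finite K] (g : G) {X : Set α}
    (hX : ∀ x ∈ X, (φ x).1 - g ∈ K) : Nat.card X ≤ Nat.card K * Nat.card β := by
  rw [← Nat.card_prod]
  refine Nat.card_le_card_of_injective (fun x => (⟨(φ x).1 - g, hX x x.2⟩, (φ x).2)) ?_
  intro x y hxy
  simp only [Prod.mk.injEq, Subtype.mk.injEq, sub_left_inj] at hxy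
  exact Subtype.ext (φ.injective (Prod.ext hxy.1 hxy.2))

def labelSumColouring {α V β : Type*} [AddCommMagma V] (L : α → V) (c : V → β) : Sym2 α → β :=
  Sym2.lift ⟨fun u v => c (L u + L v), fun _ _ => congrArg c (add_comm _ _)⟩

@[simp]
theorem labelSumColouring_mk {α V β : Type*} [AddCommMagma V] (L : α → V) (c : V → β) (u v : α) :
    labelSumColouring L c s(u, v) = c (L u + L v) :=
  rfl

theorem sub_mem_span_of_labelSumColouring_mem {α V β : Type*} [AddCommGroup V]
    [Module (ZMod 2) V] [Fintype V] [DecidableEq V] [DecidableEq β] {L : α → V} {c : V → β}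
    {C : Finset β} {u v : α} (h : labelSumColouring L c s(u, v) ∈ C) :
    L u - L v ∈ Submodule.span (ZMod 2) ({x | x ≠ 0 ∧ c x ∈ C} : Finset V) := by
  rw [ZModModule.sub_eq_add]
  by_cases h0 : L u + L v = 0
  · simp [h0]
  · exact Submodule.subset_span (by simpa [h0] using h)

theorem stmt_7_general (n r s : ℕ) (hr : 1 ≤ r) :
    ∃ f : Sym2 (Fin n) → Fin r,
      ∀ H : (⊤ : SimpleGraph (Fin n)).Subgraph, H.Connected →
        (∃ C : Finset (Fin r), C.card ≤ s ∧ ∀ e ∈ H.edgeSet, f e ∈ C) →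
        Nat.card H.verts ≤
          2 ^ s * ((n + 2 ^ Nat.log 2 (r + 1) - 1) / 2 ^ Nat.log 2 (r + 1)) := by
  classical
  set t := Nat.log 2 (r + 1)
  set B := (n + 2 ^ t - 1) / 2 ^ t
  have hnB : n ≤ 2 ^ t * B := le_smul_ceilDiv (Nat.two_pow_pos t)
  obtain ⟨φ⟩ : Nonempty (Fin n ↪ (Fin t → ZMod 2) × Fin B) :=
    Function.Embedding.nonempty_of_card_le (by simpa [ZMod.card] using hnB)
  have : Nonempty (Fin r) := ⟨⟨0, hr⟩⟩
  obtain ⟨c, hc⟩ := Fintype.exists_injOn_compl_singleton (0 : Fin t → ZMod 2) (β := Fin r)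
    (by simpa [ZMod.card] using Nat.pow_log_le_self 2 (Nat.succ_ne_zero r))
  refine ⟨labelSumColouring (fun v => (φ v).1) c, fun H hH ⟨C, hCs, hC⟩ => ?_⟩
  obtain ⟨v₀, hv₀⟩ := hH.nonempty
  set W : Finset (Fin t → ZMod 2) := {x | x ≠ 0 ∧ c x ∈ C}
  have hW : #W ≤ s := (card_le_card_of_injOn c (fun x hx => (mem_filter.1 hx).2.2)
    fun x hx y hy => hc (mem_filter.1 hx).2.1 (mem_filter.1 hy).2.1).trans hCs
  set K := Submodule.span (ZMod 2) (W : Set (Fin t → ZMod 2))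
  have hK : ∀ v ∈ H.verts, (φ v).1 - (φ v₀).1 ∈ K := fun v hv =>
    hH.sub_mem_of_forall_adj (K := K.toAddSubgroup) (L := fun v => (φ v).1)
      (fun u w huw => sub_mem_span_of_labelSumColouring_mem (hC s(u, w) huw)) hv hv₀
  have hKcard : Nat.card K ≤ 2 ^ s :=
    calc Nat.card K ≤ Nat.card (ZMod 2) ^ #W := Submodule.card_span_finset_le W
      _ ≤ 2 ^ s := by simpa using Nat.pow_le_pow_right two_pos hW
  calc Nat.card H.verts ≤ Nat.card K * Nat.card (Fin B) :=
        Nat.card_le_card_mul_of_sub_mem φ K.toAddSubgroup (φ v₀).1 hK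
    _ ≤ 2 ^ s * B := by simpa using Nat.mul_le_mul_right B hKcard

theorem stmt_7 (n r s k : ℕ) (hn : 2 ≤ n) (hr : 1 ≤ r) :
    ∃ f : Sym2 (Fin n) → Fin r,
      ∀ H : (⊤ : SimpleGraph (Fin n)).Subgraph, H.Connected →
        (∃ C : Finset (Fin r), C.card ≤ s ∧ ∀ e ∈ H.edgeSet, f e ∈ C) →
        Nat.card H.verts ≤
          2 ^ s * ((n + 2 ^ Nat.log 2 (r + 1) - 1) / 2 ^ Nat.log 2 (r + 1)) :=
  stmt_7_general n r s hr
end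

section
/- Let n, k be natural numbers with n ≥ 3k − 2. There exists a 3-colouring of the edges of K_n such that every k-connected subgraph of K_n using at most 2 of the 3 colours has at most n − k + 1 vertices; that is, m(n,3,2,k) ≤ n − k + 1. -/
/-! Split the vertices into three blocks `X₀, X₁, X₂` of size `k - 1` and a remainder `R`,
with block indices read modulo 3. Every edge from `Xᵢ` to `Xᵢ₊₁` or to `R` gets colour `i - 1`.
If a subgraph misses colour `c`, no edge of it leaves `X_{c+1}` except into `X_c`; so after
deleting the at most `k - 1` vertices of `X_c`, a `k`-connected such subgraph either avoids
`X_{c+1}`, and has at most `n - k + 1` vertices, or lies inside `X_c ∪ X_{c+1}`, and has at most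
`2k - 2 ≤ n - k + 1` vertices. -/

open SimpleGraph Set

lemma SimpleGraph.Preconnected.subset_or_compl_subset {V : Type*} {G : SimpleGraph V}
    {S A : Set V} (hG : (G.induce Sᶜ).Preconnected)
    (hA : ∀ u v, G.Adj u v → u ∈ A → v ∈ A ∪ S) :
    A ⊆ S ∨ Sᶜ ⊆ A := by
  by_contra! h
  obtain ⟨⟨x, hxA, hxS⟩, ⟨y, hyS, hyA⟩⟩ := And.intro (not_subset.1 h.1) (not_subset.1 h.2)
  obtain ⟨w⟩ := hG ⟨x, hxS⟩ ⟨y, hyS⟩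
  obtain ⟨d, -, hdA, hdA'⟩ := w.exists_boundary_dart {v : ↥Sᶜ | v.1 ∈ A} hxA hyA
  rcases hA _ _ d.adj hdA with h | h
  · exact hdA' h
  · exact d.snd.2 h

def blockColour : Option (Fin 3) → Option (Fin 3) → Fin 3
  | some i, some j => if j = i + 1 then i - 1 else if i = j + 1 then j - 1 else 0
  | some i, none => i - 1
  | none, some j => j - 1
  | none, none => 0

lemma blockColour_comm : ∀ a b, blockColour a b = blockColour b a := by decide

lemma blockColour_succ_of_ne : ∀ (c : Fin 3) (b : Option (Fin 3)),
    b ≠ some c → b ≠ some (c + 1) → blockColour (some (c + 1)) b = c := by decide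

def blockColouring {V : Type*} (p : V → Option (Fin 3)) : Sym2 V → Fin 3 :=
  Sym2.lift ⟨fun u v => blockColour (p u) (p v), fun _ _ => blockColour_comm _ _⟩

lemma ncard_verts_le_of_blockColouring {V : Type*} [Finite V] (p : V → Option (Fin 3)) {m : ℕ}
    (hp : ∀ i, (p ⁻¹' {some i}).ncard = m) (H : (⊤ : SimpleGraph V).Subgraph)
    (hH : ∀ S : Set H.verts, Nat.card S ≤ m → (H.coe.induce Sᶜ).Preconnected)
    {c : Fin 3} (hc : ∀ e ∈ H.edgeSet, blockColouring p e ≠ c) :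
    H.verts.ncard ≤ Nat.card V - m ∨ H.verts.ncard ≤ 2 * m := by
  set S : Set H.verts := {v | p v = some c}
  have hS : Nat.card S ≤ m := by
    rw [Nat.card_coe_set_eq, ← hp c, ← ncard_image_of_injective S Subtype.val_injective]
    exact ncard_le_ncard (by rintro _ ⟨v, hv, rfl⟩; exact hv)
  have hsucc_ne : c + 1 ≠ c := by
    have : ∀ c : Fin 3, c + 1 ≠ c := by decide
    exact this c
  set A : Set H.verts := {v | p v = some (c + 1)}
  have hA : ∀ u v, H.coe.Adj u v → u ∈ A → v ∈ A ∪ S := by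
    intro u v huv hu
    by_contra hv
    simp only [mem_union, not_or] at hv
    refine hc s(u.1, v.1) huv ?_
    change blockColour (p u) (p v) = c
    rw [show p u = some (c + 1) from hu]
    exact blockColour_succ_of_ne c _ hv.2 hv.1
  rcases (hH S hS).subset_or_compl_subset hA with h | h
  · left
    calc H.verts.ncard ≤ (p ⁻¹' {some (c + 1)})ᶜ.ncard :=
          ncard_le_ncard fun v hv hvc => hsucc_ne (Option.some_injective _
            (hvc.symm.trans (h (a := ⟨v, hv⟩) hvc)))
      _ = Nat.card V - m := by rw [ncard_compl, hp]
  · right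
    calc H.verts.ncard ≤ (p ⁻¹' {some c} ∪ p ⁻¹' {some (c + 1)}).ncard :=
          ncard_le_ncard fun v hv => by
            by_cases hvc : p v = some c
            · exact Or.inl hvc
            · exact Or.inr (h (a := ⟨v, hv⟩) hvc)
      _ ≤ 2 * m := by grw [ncard_union_le, hp, hp]; omega

def blockIndex (m : ℕ) {n : ℕ} (v : Fin n) : Option (Fin 3) :=
  if h : v.val < 3 * m then some ⟨v / m, Nat.div_lt_of_lt_mul (by rwa [mul_comm])⟩ else none

lemma blockIndex_preimage (m : ℕ) {n : ℕ} (i : Fin 3) :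
    (blockIndex m ⁻¹' {some i} : Set (Fin n)) = Fin.val ⁻¹' Ico (i * m) ((i + 1) * m) := by
  ext v
  simp only [blockIndex, mem_preimage, mem_singleton_iff, mem_Ico]
  split_ifs with h
  · have hm : 0 < m := by omega
    rw [Option.some_inj, Fin.ext_iff, ← Nat.le_div_iff_mul_le hm, ← Nat.div_lt_iff_lt_mul hm]
    simp only
    omega
  · have : (i + 1 : ℕ) * m ≤ 3 * m := Nat.mul_le_mul_right m i.isLt
    simp only [false_iff, not_and, not_lt]
    omega

lemma ncard_blockIndex_preimage {m n : ℕ} (h : 3 * m ≤ n) (i : Fin 3) :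
    (blockIndex m ⁻¹' {some i} : Set (Fin n)).ncard = m := by
  have : (i + 1 : ℕ) * m ≤ 3 * m := Nat.mul_le_mul_right m i.isLt
  rw [blockIndex_preimage, ncard_preimage_of_injective_subset_range Fin.val_injective,
    ncard_Ico_nat]
  · rw [add_mul]; omega
  · exact fun x hx => ⟨⟨x, (mem_Ico.1 hx).2.trans_le (this.trans h)⟩, rfl⟩

theorem stmt_10_general (n k : ℕ) (h : 3 * k ≤ n + 2) :
    ∃ f : Sym2 (Fin n) → Fin 3,
      ∀ H : (⊤ : SimpleGraph (Fin n)).Subgraph,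
        IsKConnected k H.coe →
        (∃ C : Finset (Fin 3), C.card ≤ 2 ∧ ∀ e ∈ H.edgeSet, f e ∈ C) →
        Nat.card H.verts ≤ n - k + 1 := by
  refine ⟨blockColouring (blockIndex (k - 1)), ?_⟩
  rintro H hH ⟨C, hC, hCf⟩
  obtain ⟨c, -, hc⟩ := Finset.exists_mem_notMem_of_card_lt_card
    (t := Finset.univ) (hC.trans_lt (by simp))
  have := ncard_verts_le_of_blockColouring _ (ncard_blockIndex_preimage (by omega)) H
    (fun S hS => (hH.2 S hS).preconnected) (c := c) fun e he hce => hc (hce ▸ hCf e he)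
  rw [Nat.card_fin] at this
  rw [Nat.card_coe_set_eq]
  omega

theorem stmt_10 (n k : ℕ) (hn : 2 ≤ n) (h : 3 * k ≤ n + 2) :
    ∃ f : Sym2 (Fin n) → Fin 3,
      ∀ H : (⊤ : SimpleGraph (Fin n)).Subgraph,
        IsKConnected k H.coe →
        (∃ C : Finset (Fin 3), C.card ≤ 2 ∧ ∀ e ∈ H.edgeSet, f e ∈ C) →
        Nat.card H.verts ≤ n - k + 1 :=
  stmt_10_general n k h
end

section
/- Let n, k be natural numbers with n ≤ 3k − 3. There exists a 3-colouring of the edges of K_n such that K_n contains no k-connected subgraph using at most 2 colours; that is, m(n,3,2,k) = 0. -/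
private def gcol : Fin 3 → Fin 3 → Fin 3 := fun i j => if i = j then i else 3 - i - j

private lemma gcol_symm : ∀ i j, gcol i j = gcol j i := by decide

private lemma gcol_diag : ∀ i, gcol i i = i := by decide

private lemma gcol_key2 : ∀ i j c : Fin 3, gcol i j ≠ c → i ≠ c → j ≠ c → i = j := by decide

private lemma walk_const {W : Type*} {G : SimpleGraph W} {q : W → Fin 3}
    (h : ∀ u v, G.Adj u v → q u = q v) {x y : W} (hr : G.Reachable x y) :
    q x = q y := by
  obtain ⟨w⟩ := hr
  induction w with
  | nil => rfl
  | cons ha _ ih => exact (h _ _ ha).trans ih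

private lemma walk_eq {W : Type*} {G : SimpleGraph W}
    (h : ∀ u v, ¬ G.Adj u v) {x y : W} (hr : G.Reachable x y) : x = y := by
  obtain ⟨w⟩ := hr
  cases w with
  | nil => rfl
  | cons ha _ => exact absurd ha (h _ _)

theorem stmt_11 (n k : ℕ) (hn : 2 ≤ n) (h : n ≤ 3 * k - 3) :
    ∃ f : Sym2 (Fin n) → Fin 3,
      ∀ H : (⊤ : SimpleGraph (Fin n)).Subgraph,
        ¬ (IsKConnected k H.coe ∧
            ∃ C : Finset (Fin 3), C.card ≤ 2 ∧ ∀ e ∈ H.edgeSet, f e ∈ C) := by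
  have hk : 2 ≤ k := by omega
  set m := k - 1 with hmdef
  have hm : 1 ≤ m := by omega
  have hn3 : n ≤ 3 * m := by omega
  have hpart : ∀ v : Fin n, v.1 / m < 3 := fun v =>
    Nat.div_lt_of_lt_mul (by have := v.2; omega)
  set p : Fin n → Fin 3 := fun v => ⟨v.1 / m, hpart v⟩ with hpdef
  refine ⟨fun e => Sym2.lift ⟨fun u v => gcol (p u) (p v),
    fun u v => gcol_symm _ _⟩ e, ?_⟩
  rintro H ⟨⟨hcard, hconn⟩, C, hC2, hCf⟩
  obtain ⟨c, hc⟩ : ∃ c : Fin 3, c ∉ C := by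
    by_contra hcc
    push_neg at hcc
    have hsub : (Finset.univ : Finset (Fin 3)) ⊆ C := fun x _ => hcc x
    have := Finset.card_le_card hsub
    simp at this
    omega
  have hedge : ∀ u v, H.Adj u v → gcol (p u) (p v) ≠ c := by
    intro u v huv hcol
    have hmem : s(u, v) ∈ H.edgeSet := SimpleGraph.Subgraph.mem_edgeSet.mpr huv
    have := hCf _ hmem
    simp only [Sym2.lift_mk] at this
    rw [hcol] at this
    exact hc this
  -- fibers of p intersected with anything have size ≤ m
  have hfiber : ∀ a : Fin 3, ∀ S : Set ↥H.verts, (∀ x ∈ S, p x.1 = a) →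
      Nat.card S ≤ m := by
    intro a S hS
    have key : ∀ y : ↥H.verts, y ∈ S → a.1 * m ≤ y.1.1 ∧ y.1.1 < a.1 * m + m := by
      intro y hy
      have h1 : y.1.1 / m = a.1 := congrArg Fin.val (hS y hy)
      have h2 := Nat.div_add_mod y.1.1 m
      have h3 := Nat.mod_lt y.1.1 (show 0 < m by omega)
      rw [h1] at h2
      have h4 : m * a.1 = a.1 * m := Nat.mul_comm _ _
      omega
    have hinj : Function.Injective (fun x : S =>
        (⟨x.1.1.1 - a.1 * m, by have := key x.1 x.2; omega⟩ : Fin m)) := by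
      intro x y hxy
      have hx := key x.1 x.2
      have hy := key y.1 y.2
      have hval : x.1.1.1 - a.1 * m = y.1.1.1 - a.1 * m := congrArg Fin.val hxy
      exact Subtype.ext (Subtype.ext (Fin.ext (by omega)))
    calc Nat.card S ≤ Nat.card (Fin m) := Nat.card_le_card_of_injective _ hinj
      _ = m := by simp
  by_cases hA : ∃ x : ↥H.verts, ∃ y : ↥H.verts, p x.1 ≠ c ∧ p y.1 ≠ c ∧ p x.1 ≠ p y.1
  · -- two vertices outside the c-part with distinct parts
    obtain ⟨x, y, hxc, hyc, hxy⟩ := hA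
    set Scut : Set ↥H.verts := {z | p z.1 = c} with hScut
    have hcon := hconn Scut (by
      have := hfiber c Scut (fun z hz => hz)
      omega)
    have hxmem : x ∈ Scutᶜ := hxc
    have hymem : y ∈ Scutᶜ := hyc
    have hreach := hcon.preconnected ⟨x, hxmem⟩ ⟨y, hymem⟩
    have hconst : ∀ u v : ↥(Scutᶜ), (H.coe.induce Scutᶜ).Adj u v →
        p u.1.1 = p v.1.1 := by
      intro u v huv
      have hadj : H.Adj u.1.1 v.1.1 := by
        simpa using huv
      exact gcol_key2 _ _ c (hedge _ _ hadj) u.2 v.2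
    exact hxy (walk_const hconst hreach)
  · push_neg at hA
    set S' : Set ↥H.verts := {z | p z.1 ≠ c} with hS'
    have hS'card : Nat.card S' ≤ m := by
      rcases S'.eq_empty_or_nonempty with hE | ⟨x0, hx0⟩
      · refine hfiber c S' (fun z hz => ?_)
        rw [hE] at hz
        exact absurd hz (Set.notMem_empty z)
      · exact hfiber (p x0.1) S' (fun z hz => hA z x0 hz hx0)
    have hcon := hconn S' (by omega)
    have hnoadj : ∀ u v : ↥(S'ᶜ), ¬ (H.coe.induce S'ᶜ).Adj u v := by
      intro u v huv
      have hadj : H.Adj u.1.1 v.1.1 := by simpa using huv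
      have hu : p u.1.1 = c := not_not.mp u.2
      have hv : p v.1.1 = c := not_not.mp v.2
      have := hedge _ _ hadj
      rw [hu, hv, gcol_diag] at this
      exact this rfl
    -- S'ᶜ has at least two vertices
    have hsplit : (S' : Set ↥H.verts).ncard + (S'ᶜ : Set ↥H.verts).ncard =
        Nat.card ↥H.verts := Set.ncard_add_ncard_compl S'
    have hcS : Nat.card S' = S'.ncard := (Nat.card_coe_set_eq S')
    have hcSc : Nat.card ↥(S'ᶜ) = (S'ᶜ).ncard := (Nat.card_coe_set_eq (S'ᶜ))
    have h2 : 1 < (S'ᶜ : Set ↥H.verts).ncard := by omega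
    obtain ⟨a, b, ha, hb, hab⟩ := (Set.one_lt_ncard_iff (Set.toFinite _)).mp h2
    have := walk_eq hnoadj (hcon.preconnected ⟨a, ha⟩ ⟨b, hb⟩)
    exact hab (congrArg Subtype.val this)
end

section
/- Let n, s, k be natural numbers with n ≥ 2·C(2s,s)·(k−1) + 1. There exists a 2s-colouring of E(K_n) such that every k-connected subgraph using at most s colours has at most n − 2k + 2 vertices; that is, m(n,2s,s,k) ≤ n − 2k + 2. -/
section aux

/-- pick an element of `D`, with default `z`. -/
noncomputable def pickC {m : ℕ} (z : Fin m) (D : Finset (Fin m)) : Fin m :=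
  if h : D.Nonempty then D.min' h else z

lemma pickC_mem {m : ℕ} (z : Fin m) {D : Finset (Fin m)} (h : D.Nonempty) :
    pickC z D ∈ D := by
  rw [pickC, dif_pos h]; exact D.min'_mem h

/-- the colour assigned to an edge between special vertices `(C, i)` and `(C', j)`. -/
noncomputable def pc {s : ℕ} (z : Fin (2*s)) (K : ℕ)
    (C : Finset (Fin (2*s))) (i : ℕ) (C' : Finset (Fin (2*s))) (j : ℕ) : Fin (2*s) :=
  if C = C' then pickC z Cᶜ
  else if C' = Cᶜ then
    (if z ∈ C then
       (if decide (i < K) = decide (j < K) then pickC z C else pickC z Cᶜ)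
     else
       (if decide (i < K) = decide (j < K) then pickC z C' else pickC z C'ᶜ))
  else pickC z (C ∪ C')ᶜ

lemma pc_symm {s : ℕ} (z : Fin (2*s)) (K : ℕ) (C C' : Finset (Fin (2*s))) (i j : ℕ) :
    pc z K C i C' j = pc z K C' j C i := by
  unfold pc
  by_cases h1 : C = C'
  · rw [if_pos h1, if_pos h1.symm, h1]
  · rw [if_neg h1, if_neg (show ¬(C' = C) from fun hh => h1 hh.symm)]
    by_cases h2 : C' = Cᶜ
    · have h2' : C = C'ᶜ := by rw [h2, compl_compl]
      rw [if_pos h2, if_pos h2']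
      by_cases h0 : z ∈ C
      · have h0' : z ∉ C' := by rw [h2, Finset.mem_compl]; exact fun h => h h0
        rw [if_pos h0, if_neg h0']
        by_cases hc : decide (i < K) = decide (j < K)
        · rw [if_pos hc, if_pos hc.symm]
        · rw [if_neg hc, if_neg (fun h => hc h.symm)]
      · have h0' : z ∈ C' := by rw [h2, Finset.mem_compl]; exact h0
        rw [if_neg h0, if_pos h0']
        by_cases hc : decide (i < K) = decide (j < K)
        · rw [if_pos hc, if_pos hc.symm]
        · rw [if_neg hc, if_neg (fun h => hc h.symm)]
    · have h2' : ¬ C = C'ᶜ := fun h => h2 (by rw [h, compl_compl])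
      rw [if_neg h2, if_neg h2', Finset.union_comm]

/-- The colouring function on ordered pairs of vertices. -/
noncomputable def FF {n s K : ℕ} (z : Fin (2*s))
    (ι : ({C : Finset (Fin (2*s)) // C.card = s} × Fin (2*K)) ↪ Fin n)
    (a b : Fin n) : Fin (2*s) :=
  if ha : ∃ p, ι p = a then
    if hb : ∃ p, ι p = b then
      pc z K ha.choose.1.1 ha.choose.2.1 hb.choose.1.1 hb.choose.2.1
    else pickC z (ha.choose.1.1)ᶜ
  else if hb : ∃ p, ι p = b then pickC z (hb.choose.1.1)ᶜ
  else z

lemma FF_symm {n s K : ℕ} (z : Fin (2*s))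
    (ι : ({C : Finset (Fin (2*s)) // C.card = s} × Fin (2*K)) ↪ Fin n)
    (a b : Fin n) : FF z ι a b = FF z ι b a := by
  unfold FF
  by_cases ha : ∃ p, ι p = a <;> by_cases hb : ∃ p, ι p = b
  · simp only [dif_pos ha, dif_pos hb]; exact pc_symm z K _ _ _ _
  · simp only [dif_pos ha, dif_neg hb]
  · simp only [dif_neg ha, dif_pos hb]
  · simp only [dif_neg ha, dif_neg hb]

lemma compl_union_nonempty {s : ℕ} {C C' : Finset (Fin (2*s))}
    (hC : C.card = s) (hC' : C'.card = s) (hne : C' ≠ Cᶜ) :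
    ((C ∪ C')ᶜ).Nonempty := by
  rw [Finset.nonempty_iff_ne_empty]
  intro hemp
  rw [Finset.compl_eq_empty_iff] at hemp
  have hcardu : (C ∪ C').card = 2*s := by rw [hemp, Finset.card_univ, Fintype.card_fin]
  have hci := Finset.card_union_add_card_inter C C'
  have hint : (C ∩ C').card = 0 := by omega
  rw [Finset.card_eq_zero] at hint
  apply hne
  apply Finset.eq_of_subset_of_card_le
  · intro x hx
    rw [Finset.mem_compl]
    intro hxC
    have hmem : x ∈ C ∩ C' := Finset.mem_inter.mpr ⟨hxC, hx⟩
    rw [hint] at hmem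
    exact absurd hmem (Finset.notMem_empty x)
  · rw [Finset.card_compl, Fintype.card_fin, hC, hC']
    omega

lemma exists_adj_of_reachable {V : Type*} {G : SimpleGraph V} {a b : V}
    (hne : a ≠ b) (h : G.Reachable a b) : ∃ c, G.Adj a c := by
  obtain ⟨p⟩ := h
  cases p with
  | nil => exact absurd rfl hne
  | cons h q => exact ⟨_, h⟩

end aux

theorem stmt_14 (n s k : ℕ) (hn : 2 ≤ n) (hs : 1 ≤ s)
    (h : 2 * Nat.choose (2 * s) s * (k - 1) + 1 ≤ n) :
    ∃ f : Sym2 (Fin n) → Fin (2 * s),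
      ∀ H : (⊤ : SimpleGraph (Fin n)).Subgraph,
        IsKConnected k H.coe →
        (∃ C : Finset (Fin (2 * s)), C.card ≤ s ∧ ∀ e ∈ H.edgeSet, f e ∈ C) →
        Nat.card H.verts ≤ n + 2 - 2 * k := by
  rcases Nat.lt_or_ge k 2 with hk | hk
  · refine ⟨fun _ => ⟨0, by omega⟩, fun H _ _ => ?_⟩
    have hle : Nat.card H.verts ≤ n := by
      have h1 := Nat.card_le_card_of_injective (fun x : H.verts => (x.1 : Fin n))
        (fun a b hab => Subtype.ext hab)
      simpa using h1
    omega
  · obtain ⟨K, rfl⟩ : ∃ K, k = K + 1 := ⟨k-1, by omega⟩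
    have hK : 0 < K := by omega
    simp only [Nat.add_sub_cancel] at h
    obtain ⟨z⟩ : Nonempty (Fin (2*s)) := ⟨⟨0, by omega⟩⟩
    have hcard : Fintype.card (({C : Finset (Fin (2*s)) // C.card = s}) × Fin (2*K)) ≤
        Fintype.card (Fin n) := by
      simp only [Fintype.card_prod, Fintype.card_fin, Fintype.card_finset_len]
      have heq : Nat.choose (2*s) s * (2*K) = 2 * Nat.choose (2*s) s * K := by ring
      rw [heq]
      exact le_of_lt (Nat.lt_of_succ_le h)
    obtain ⟨ι⟩ := Function.Embedding.nonempty_of_card_le hcard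
    refine ⟨Sym2.lift ⟨fun a b => FF z ι a b, fun a b => FF_symm z ι a b⟩, ?_⟩
    intro H hconn hD
    obtain ⟨D, hDcard, hDe⟩ := hD
    obtain ⟨C0, hDC0, hC0card⟩ := Finset.exists_superset_card_eq hDcard
      (by rw [Fintype.card_fin]; omega)
    have hcc : (C0ᶜ).card = s := by
      rw [Finset.card_compl, hC0card, Fintype.card_fin]; omega
    have hccne : (C0ᶜ).Nonempty := Finset.card_pos.mp (by rw [hcc]; omega)
    -- the reserved vertices for colour set C0 are not in H
    have hnot : ∀ i : Fin (2*K), ι (⟨C0, hC0card⟩, i) ∉ H.verts := by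
      intro i hv
      set v : Fin n := ι (⟨C0, hC0card⟩, i) with hvdef
      -- any vertex sending an edge to v with colour in C0 is a reserved vertex of C0ᶜ
      have hUsub : ∀ u : Fin n, FF z ι v u ∈ C0 →
          ∃ j : Fin (2*K), ι (⟨C0ᶜ, hcc⟩, j) = u ∧
            decide (j.1 < K) = (if z ∈ C0 then decide (i.1 < K) else !decide (i.1 < K)) := by
        intro u hmem
        have hex : ∃ p, ι p = v := ⟨(⟨C0, hC0card⟩, i), hvdef.symm⟩
        unfold FF at hmem
        rw [dif_pos hex] at hmem
        have hch : hex.choose = (⟨C0, hC0card⟩, i) := ι.injective (hex.choose_spec.trans hvdef)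
        rw [hch] at hmem
        by_cases hu : ∃ p, ι p = u
        · rw [dif_pos hu] at hmem
          have hqspec : ι hu.choose = u := hu.choose_spec
          set q := hu.choose with hqdef
          unfold pc at hmem
          by_cases h1 : C0 = q.1.1
          · rw [if_pos h1] at hmem
            exact absurd hmem (Finset.mem_compl.mp (pickC_mem z hccne))
          · rw [if_neg h1] at hmem
            by_cases h2 : q.1.1 = C0ᶜ
            · rw [if_pos h2] at hmem
              have hq1 : q.1 = ⟨C0ᶜ, hcc⟩ := Subtype.ext h2
              have hqeq : q = (⟨C0ᶜ, hcc⟩, q.2) := by rw [← hq1]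
              by_cases h0 : z ∈ C0
              · rw [if_pos h0] at hmem
                by_cases hc : decide (i.1 < K) = decide (q.2.1 < K)
                · refine ⟨q.2, ?_, ?_⟩
                  · rw [← hqeq]; exact hqspec
                  · rw [if_pos h0]; exact hc.symm
                · rw [if_neg hc] at hmem
                  exact absurd hmem (Finset.mem_compl.mp (pickC_mem z hccne))
              · rw [if_neg h0] at hmem
                rw [h2, compl_compl] at hmem
                by_cases hc : decide (i.1 < K) = decide (q.2.1 < K)
                · rw [if_pos hc] at hmem
                  exact absurd hmem (Finset.mem_compl.mp (pickC_mem z hccne))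
                · refine ⟨q.2, ?_, ?_⟩
                  · rw [← hqeq]; exact hqspec
                  · rw [if_neg h0]
                    cases hb1 : decide (i.1 < K) <;> cases hb2 : decide (q.2.1 < K)
                    · exact absurd (hb1.trans hb2.symm) hc
                    · rfl
                    · rfl
                    · exact absurd (hb1.trans hb2.symm) hc
            · rw [if_neg h2] at hmem
              have hne2 : ((C0 ∪ q.1.1)ᶜ).Nonempty :=
                compl_union_nonempty hC0card q.1.2 h2
              have hpm := pickC_mem z hne2
              rw [Finset.mem_compl] at hpm
              exact absurd (Finset.mem_union_left _ hmem) hpm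
        · rw [dif_neg hu] at hmem
          exact absurd hmem (Finset.mem_compl.mp (pickC_mem z hccne))
      set U : Set (Fin n) := {u | FF z ι v u ∈ C0} with hUdef
      have hUcard : Nat.card U ≤ K := by
        have hkey : ∀ u1 u2 : U,
            (Classical.choose (hUsub u1.1 u1.2)).1 % K
              = (Classical.choose (hUsub u2.1 u2.2)).1 % K → u1 = u2 := by
          intro u1 u2 hmod
          obtain ⟨hj1, hb1⟩ := Classical.choose_spec (hUsub u1.1 u1.2)
          obtain ⟨hj2, hb2⟩ := Classical.choose_spec (hUsub u2.1 u2.2)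
          set j1 := Classical.choose (hUsub u1.1 u1.2) with hj1def
          set j2 := Classical.choose (hUsub u2.1 u2.2) with hj2def
          have hbeq : decide (j1.1 < K) = decide (j2.1 < K) := hb1.trans hb2.symm
          have hiff : (j1.1 < K ↔ j2.1 < K) := decide_eq_decide.mp hbeq
          have hjj : j1.1 = j2.1 := by
            by_cases hlt : j1.1 < K
            · rw [Nat.mod_eq_of_lt hlt, Nat.mod_eq_of_lt (hiff.mp hlt)] at hmod
              exact hmod
            · have h1' : K ≤ j1.1 := le_of_not_gt hlt
              have h2' : K ≤ j2.1 := le_of_not_gt (fun hh => hlt (hiff.mpr hh))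
              have hl1 : j1.1 < 2*K := j1.2
              have hl2 : j2.1 < 2*K := j2.2
              have e1 : j1.1 % K = j1.1 - K := by
                rw [Nat.mod_eq_sub_mod h1', Nat.mod_eq_of_lt (by omega)]
              have e2 : j2.1 % K = j2.1 - K := by
                rw [Nat.mod_eq_sub_mod h2', Nat.mod_eq_of_lt (by omega)]
              rw [e1, e2] at hmod
              omega
          have hj12 : j1 = j2 := Fin.ext hjj
          apply Subtype.ext
          rw [← hj1, ← hj2, hj12]
        have hginj : Function.Injective
            (fun u : U => (⟨(Classical.choose (hUsub u.1 u.2)).1 % K,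
              Nat.mod_lt _ hK⟩ : Fin K)) := by
          intro u1 u2 h12
          exact hkey u1 u2 (congrArg Fin.val h12)
        calc Nat.card U ≤ Nat.card (Fin K) := Nat.card_le_card_of_injective _ hginj
          _ = K := by simp
      set S : Set H.verts := {w : H.verts | H.Adj v w.1} with hSdef
      have hSU : ∀ w : H.verts, w ∈ S → (w.1 : Fin n) ∈ U := by
        intro w hw
        have hadj : H.Adj v w.1 := hw
        have hedge : s(v, w.1) ∈ H.edgeSet := (SimpleGraph.Subgraph.mem_edgeSet).mpr hadj
        have hfD := hDe s(v, w.1) hedge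
        have hfeq : FF z ι v w.1 ∈ D := by
          simpa [Sym2.lift_mk] using hfD
        exact hDC0 hfeq
      have hmapinj : Function.Injective (fun w : S => (⟨w.1.1, hSU w.1 w.2⟩ : U)) := by
        intro a b hab
        simp only [Subtype.mk.injEq] at hab
        exact Subtype.ext (Subtype.ext hab)
      have hScardK : Nat.card S ≤ K :=
        le_trans (Nat.card_le_card_of_injective _ hmapinj) hUcard
      have hcon := hconn.2 S (by simpa using hScardK)
      have hvv : (⟨v, hv⟩ : H.verts) ∈ Sᶜ := by
        intro hmem
        exact (SimpleGraph.Subgraph.Adj.ne (hmem : H.Adj v v)) rfl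
      have hnc := Set.ncard_add_ncard_compl S
      have hncS : S.ncard ≤ K := by rw [← Nat.card_coe_set_eq]; exact hScardK
      have hbig := hconn.1
      have h2c : 1 < (Sᶜ).ncard := by omega
      obtain ⟨w, hwS, hwne⟩ := Set.exists_ne_of_one_lt_ncard h2c ⟨v, hv⟩
      have hne : (⟨⟨v, hv⟩, hvv⟩ : ↥(Sᶜ)) ≠ ⟨w, hwS⟩ :=
        fun hh => hwne (congrArg Subtype.val hh).symm
      obtain ⟨c, hc⟩ := exists_adj_of_reachable hne (hcon.preconnected _ _)
      have hcS : c.1 ∈ S := by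
        have h1 : H.coe.Adj ⟨v, hv⟩ c.1 := hc
        exact h1
      exact c.2 hcS
    -- final counting
    have hφinj : Function.Injective
        (Sum.elim (fun x : H.verts => (x.1 : Fin n))
          (fun i : Fin (2*K) => ι (⟨C0, hC0card⟩, i))) := by
      intro a b hab
      cases a with
      | inl a =>
        cases b with
        | inl b =>
          simp only [Sum.elim_inl] at hab
          exact congrArg Sum.inl (Subtype.ext hab)
        | inr jb =>
          simp only [Sum.elim_inl, Sum.elim_inr] at hab
          exact absurd (hab ▸ a.2) (hnot jb)
      | inr ja =>
        cases b with
        | inl b =>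
          simp only [Sum.elim_inl, Sum.elim_inr] at hab
          exact absurd (hab.symm ▸ b.2) (hnot ja)
        | inr jb =>
          simp only [Sum.elim_inr] at hab
          have hpair := ι.injective hab
          have hj : ja = jb := congrArg Prod.snd hpair
          rw [hj]
    have hcount := Nat.card_le_card_of_injective _ hφinj
    rw [Nat.card_sum] at hcount
    have hfin1 : Nat.card (Fin (2*K)) = 2*K := by simp
    have hfin2 : Nat.card (Fin n) = n := by simp
    omega
end

section
/- Let n, r, s, k be natural numbers with 2s < r. There exists an r-colouring of E(K_n) such that every k-connected subgraph using at most s colours has at most ⌈(1 − 1/C(r,s)) n⌉ vertices; that is, m(n,r,s,k) ≤ ⌈(1 − C(r,s)^{−1}) n⌉. -/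
open Finset

theorem IsKConnected.connected {k : ℕ} {V : Type*} {G : SimpleGraph V}
    (hG : IsKConnected k G) : G.Connected := by
  have h := hG.2 ∅ (by simp)
  rw [Set.compl_empty] at h
  exact G.induceUnivIso.connected_iff.mp h

lemma SimpleGraph.Preconnected.eq_of_forall_not_adj {V : Type*} {G : SimpleGraph V}
    (hG : G.Preconnected) {v : V} (hv : ∀ w, ¬ G.Adj v w) (w : V) : w = v := by
  obtain ⟨p⟩ := hG v w
  cases p with
  | nil => rfl
  | cons h _ => exact absurd h (hv _)

lemma SimpleGraph.Subgraph.card_verts_eq_one_of_forall_not_adj {V : Type*} {G : SimpleGraph V}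
    {H : G.Subgraph} (hH : H.coe.Connected) {v : V} (hv : v ∈ H.verts)
    (hiso : ∀ w, ¬ H.Adj v w) : Nat.card H.verts = 1 := by
  have hall := hH.preconnected.eq_of_forall_not_adj (v := ⟨v, hv⟩) fun w => hiso w
  have : Subsingleton H.verts := ⟨fun a b => (hall a).trans (hall b).symm⟩
  exact Nat.card_of_subsingleton ⟨v, hv⟩

lemma Nat.card_add_card_le_of_disjoint {V : Type*} [Fintype V] {S : Set V} {T : Finset V}
    (hST : ∀ v ∈ S, v ∉ T) : Nat.card S + #T ≤ Fintype.card V := by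
  classical
  rw [← card_compl_add_card T, Nat.card_eq_card_toFinset, Nat.add_le_add_iff_right]
  exact card_le_card fun v hv => mem_compl.mpr (hST v (Set.mem_toFinset.mp hv))

lemma Int.ceil_one_sub_inv_mul (n t : ℕ) : ⌈(1 - (t : ℝ)⁻¹) * n⌉ = (n : ℤ) - (n / t : ℕ) := by
  rw [one_sub_mul, inv_mul_eq_div, sub_eq_neg_add, Int.ceil_add_natCast, Int.ceil_neg,
    Int.floor_div_natCast, Int.floor_natCast]
  push_cast
  ring

lemma Fin.div_le_card_filter_val_mod_eq {n t j : ℕ} (hj : j < t) :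
    n / t ≤ #{v : Fin n | v.val % t = j} := by
  have hcount : #{v : Fin n | v.val % t = j} = Nat.count (· ≡ j [MOD t]) n := by
    rw [Nat.count_eq_card_filter_range, ← card_map Fin.valEmbedding]
    congr 1
    ext x
    simp only [mem_map, mem_filter, mem_univ, true_and, mem_range, Fin.valEmbedding_apply,
      Nat.ModEq, Nat.mod_eq_of_lt hj]
    exact ⟨by rintro ⟨v, hv, rfl⟩; exact ⟨v.2, hv⟩, fun ⟨hx, hxj⟩ => ⟨⟨x, hx⟩, hxj, rfl⟩⟩
  rw [hcount, Nat.count_modEq_card n (by omega)]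
  exact Nat.le_add_right _ _

lemma Fin.exists_div_card_le_card_fiber (n : ℕ) (κ : Type*) [Fintype κ] [Nonempty κ]
    [DecidableEq κ] : ∃ p : Fin n → κ, ∀ i, n / Fintype.card κ ≤ #{v | p v = i} := by
  let e := Fintype.equivFin κ
  have ht : 0 < Fintype.card κ := Fintype.card_pos
  refine ⟨fun v => e.symm ⟨v % Fintype.card κ, Nat.mod_lt _ ht⟩, fun i => ?_⟩
  simp only [Equiv.symm_apply_eq, Fin.ext_iff]
  exact Fin.div_le_card_filter_val_mod_eq (e i).2

lemma Sym2.exists_colouring_notMem {V α : Type*} [Fintype α] [DecidableEq α] {s : ℕ}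
    (A : V → Finset α) (hA : ∀ v, #(A v) ≤ s) (h : 2 * s < Fintype.card α) :
    ∃ f : Sym2 V → α, ∀ z, ∀ v ∈ z, f z ∉ A v := by
  have hz : ∀ z : Sym2 V, ∃ c : α, ∀ v ∈ z, c ∉ A v := by
    refine Sym2.ind fun u w => ?_
    have hcard : #(A u ∪ A w) < #(univ : Finset α) := by
      have hunion := card_union_le (A u) (A w)
      have hu := hA u
      have hw := hA w
      rw [card_univ]
      omega
    obtain ⟨c, -, hc⟩ := exists_mem_notMem_of_card_lt_card hcard
    refine ⟨c, fun v hv => ?_⟩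
    rcases Sym2.mem_iff.mp hv with rfl | rfl
    exacts [fun hcv => hc (mem_union_left _ hcv), fun hcv => hc (mem_union_right _ hcv)]
  choose f hf using hz
  exact ⟨f, hf⟩

theorem stmt_15_general (n r s k : ℕ) (hs : 1 ≤ s) (h : 2 * s < r) :
    ∃ f : Sym2 (Fin n) → Fin r,
      ∀ H : (⊤ : SimpleGraph (Fin n)).Subgraph,
        IsKConnected k H.coe →
        (∃ C : Finset (Fin r), C.card ≤ s ∧ ∀ e ∈ H.edgeSet, f e ∈ C) →
        (Nat.card H.verts : ℤ) ≤ ⌈(1 - ((r.choose s : ℝ))⁻¹) * n⌉ := by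
  let κ := {C : Finset (Fin r) // #C = s}
  have hκ : Fintype.card κ = r.choose s := by simp [κ]
  have htwo : 2 ≤ Fintype.card κ := by
    have hpos := Nat.choose_pos (show s ≤ r by omega)
    have hne : r.choose s ≠ 1 := Nat.choose_eq_one_iff.not.mpr (by omega)
    omega
  have : Nonempty κ := Fintype.card_pos_iff.mp (by omega)
  obtain ⟨p, hp⟩ := Fin.exists_div_card_le_card_fiber n κ
  obtain ⟨f, hf⟩ := Sym2.exists_colouring_notMem (fun v => (p v).1) (fun v => (p v).2.le)
    (by simpa using h)
  refine ⟨f, fun H hH ⟨C, hC, hCf⟩ => ?_⟩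
  obtain ⟨C', hCC', hC'⟩ := exists_superset_card_eq hC (by rw [Fintype.card_fin]; omega)
  have hisolated : ∀ v, p v = ⟨C', hC'⟩ → ∀ w, ¬ H.Adj v w := fun v hv w hvw =>
    hf s(v, w) v (Sym2.mem_mk_left _ _) (hv ▸ hCC' (hCf _ hvw))
  rw [Int.ceil_one_sub_inv_mul, ← hκ]
  by_cases hmeet : ∃ v ∈ H.verts, p v = ⟨C', hC'⟩
  · obtain ⟨v, hv, hpv⟩ := hmeet
    have hone := H.card_verts_eq_one_of_forall_not_adj hH.connected hv (hisolated v hpv)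
    have hdiv := Nat.div_lt_self v.pos htwo
    omega
  · have hmiss := Nat.card_add_card_le_of_disjoint (S := H.verts)
      (T := {v | p v = ⟨C', hC'⟩}) (by simpa using hmeet)
    have hclass := hp ⟨C', hC'⟩
    rw [Fintype.card_fin] at hmiss
    omega

theorem stmt_15 (n r s k : ℕ) (hn : 2 ≤ n) (hs : 1 ≤ s) (h : 2 * s < r) :
    ∃ f : Sym2 (Fin n) → Fin r,
      ∀ H : (⊤ : SimpleGraph (Fin n)).Subgraph,
        IsKConnected k H.coe →
        (∃ C : Finset (Fin r), C.card ≤ s ∧ ∀ e ∈ H.edgeSet, f e ∈ C) →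
        (Nat.card H.verts : ℤ) ≤ ⌈(1 - ((r.choose s : ℝ))⁻¹) * n⌉ :=
  stmt_15_general n r s k hs h
end

section
/- For all natural numbers n, r, s, k, there exists an r-colouring of E(K_n) such that every connected subgraph using at most s colours has at most (s+1)·⌈n/⌊√(2r)⌋⌉ vertices; hence m(n,r,s,k) ≤ (s+1)·⌈n/⌊√(2r)⌋⌉. -/
/-!
Split the vertices into `t = ⌊√(2r)⌋` blocks of at most `⌈n/t⌉` vertices. Since
`t.choose 2 ≤ r`, the pairs of distinct blocks can receive pairwise distinct colours; an edge of
`K_n` gets the colour of the pair of blocks containing its ends. Collapsing the blocks turns a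
connected subgraph into a connected graph on the blocks it meets, whose edges all have different
colours. With at most `s` colours it has at most `s` edges, hence meets at most `s + 1` blocks.
-/

open Function

lemma Nat.card_le_mul_card_range {α β : Type*} [Finite α] (f : α → β) {q : ℕ}
    (hf : ∀ b, Nat.card (f ⁻¹' {b}) ≤ q) : Nat.card α ≤ q * Nat.card (Set.range f) := by
  classical
  have := Fintype.ofFinite α
  rw [Nat.card_eq_fintype_card, Nat.card_eq_card_toFinset, Set.toFinset_range]
  refine Finset.card_le_mul_card_image _ q fun b _ => ?_
  simpa [Nat.card_eq_card_toFinset, Set.toFinset_ofPred] using hf b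

lemma Fin.exists_card_preimage_le {n t q : ℕ} (h : n ≤ t * q) :
    ∃ blk : Fin n → Fin t, ∀ b, Nat.card (blk ⁻¹' {b}) ≤ q := by
  let e : Fin n → Fin t × Fin q := finProdFinEquiv.symm ∘ Fin.castLE h
  have he : Injective e := finProdFinEquiv.symm.injective.comp (Fin.castLE_injective h)
  refine ⟨Prod.fst ∘ e, fun b => ?_⟩
  have hinj : Injective fun v : (Prod.fst ∘ e) ⁻¹' {b} => (e v).2 := by
    intro v w hvw
    exact Subtype.ext (he (Prod.ext (v.2.trans w.2.symm) hvw))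
  simpa using Nat.card_le_card_of_injective _ hinj

namespace SimpleGraph
variable {V W : Type*} {G : SimpleGraph V}

lemma Reachable.map_of_fun (f : V → W) {u v : V} (h : G.Reachable u v) :
    (G.map f).Reachable (f u) (f v) := by
  rw [reachable_iff_reflTransGen] at h ⊢
  refine Relation.ReflTransGen.lift' f (fun a b hab => ?_) _ _ h
  by_cases hf : f a = f b
  · rw [Function.onFun, hf]
  · exact .single (map_adj_apply' hab hf)

lemma Connected.map_of_surjective (hG : G.Connected) {f : V → W} (hf : Surjective f) :
    (G.map f).Connected := by
  refine (connected_iff _).2 ⟨fun a b => ?_, hG.nonempty.map f⟩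
  obtain ⟨u, rfl⟩ := hf a
  obtain ⟨v, rfl⟩ := hf b
  exact (hG u v).map_of_fun f

lemma edgeSet_map_subset (f : V → W) : (G.map f).edgeSet ⊆ Sym2.map f '' G.edgeSet := by
  intro e he
  induction e using Sym2.ind with
  | _ a b =>
    obtain ⟨-, u, v, huv, rfl, rfl⟩ := he
    exact ⟨s(u, v), huv, rfl⟩

lemma Connected.card_range_le_card_edgeSet_map_add_one [Finite W] (hG : G.Connected)
    (f : V → W) : Nat.card (Set.range f) ≤ Nat.card (G.map f).edgeSet + 1 := by
  refine (hG.map_of_surjective Set.rangeFactorization_surjective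
    |>.card_vert_le_card_edgeSet_add_one).trans ?_
  let φ : G.map (Set.rangeFactorization f) →g G.map f :=
    ⟨Subtype.val, fun ⟨hne, u, v, huv, hu, hv⟩ => ⟨Subtype.coe_ne_coe.2 hne, u, v, huv,
      congrArg Subtype.val hu, congrArg Subtype.val hv⟩⟩
  gcongr
  exact Nat.card_le_card_of_injective _ (Hom.mapEdgeSet.injective φ Subtype.val_injective)

end SimpleGraph

lemma Nat.choose_sqrt_two_mul_two_le (r : ℕ) : (Nat.sqrt (2 * r)).choose 2 ≤ r := by
  rw [Nat.choose_two_right]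
  refine Nat.div_le_of_le_mul ?_
  calc Nat.sqrt (2 * r) * (Nat.sqrt (2 * r) - 1) ≤ Nat.sqrt (2 * r) * Nat.sqrt (2 * r) :=
        Nat.mul_le_mul_left _ (Nat.sub_le _ _)
    _ ≤ 2 * r := Nat.sqrt_le _

lemma Sym2.exists_injOn_not_isDiag {α β : Type*} [Fintype α] [Fintype β] [Nonempty β]
    (h : (Fintype.card α).choose 2 ≤ Fintype.card β) :
    ∃ c : Sym2 α → β, Set.InjOn c {e | ¬e.IsDiag} := by
  classical
  rw [← Sym2.card_subtype_not_diag] at h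
  obtain ⟨emb⟩ := Function.Embedding.nonempty_of_card_le h
  refine ⟨fun e => if he : e.IsDiag then Classical.arbitrary β else emb ⟨e, he⟩,
    fun e he e' he' hee' => ?_⟩
  simp only [dif_neg (show ¬e.IsDiag from he), dif_neg (show ¬e'.IsDiag from he')] at hee'
  exact congrArg Subtype.val (emb.injective hee')

lemma SimpleGraph.card_edgeSet_le_of_injOn {W α : Type*} (Q : SimpleGraph W) {c : Sym2 W → α}
    (hc : Set.InjOn c {e | ¬e.IsDiag}) {C : Finset α} (hC : ∀ e ∈ Q.edgeSet, c e ∈ C) :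
    Nat.card Q.edgeSet ≤ C.card := by
  rw [Nat.card_coe_set_eq, ← Set.ncard_coe_finset]
  exact Set.ncard_le_ncard_of_injOn c hC (hc.mono fun _ => Q.not_isDiag_of_mem_edgeSet)
    C.finite_toSet

theorem stmt_17_general (n r s : ℕ) (hr : 1 ≤ r) :
    ∃ f : Sym2 (Fin n) → Fin r,
      ∀ H : (⊤ : SimpleGraph (Fin n)).Subgraph, H.Connected →
        (∃ C : Finset (Fin r), C.card ≤ s ∧ ∀ e ∈ H.edgeSet, f e ∈ C) →
        Nat.card H.verts ≤
          (s + 1) * ((n + Nat.sqrt (2 * r) - 1) / Nat.sqrt (2 * r)) := by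
  set t := Nat.sqrt (2 * r)
  set q := (n + t - 1) / t
  have ht : 0 < t := Nat.sqrt_pos.2 (by omega)
  have : NeZero r := ⟨by omega⟩
  obtain ⟨c, hc⟩ := Sym2.exists_injOn_not_isDiag (α := Fin t) (β := Fin r)
    (by simpa using Nat.choose_sqrt_two_mul_two_le r)
  obtain ⟨blk, hblk⟩ := Fin.exists_card_preimage_le (n := n) (t := t) (q := q) (by
    have : t * q + (n + t - 1) % t = n + t - 1 := Nat.div_add_mod _ _
    have := Nat.mod_lt (n + t - 1) ht
    omega)
  refine ⟨fun e => c (e.map blk), fun H hH ⟨C, hCs, hC⟩ => ?_⟩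
  set φ : H.verts → Fin t := blk ∘ Subtype.val
  have hcolours : ∀ e ∈ (H.coe.map φ).edgeSet, c e ∈ C := by
    intro _ hmap
    obtain ⟨e, he, rfl⟩ := SimpleGraph.edgeSet_map_subset φ hmap
    rw [SimpleGraph.Subgraph.edgeSet_coe] at he
    simpa only [Sym2.map_map] using hC _ he
  have hfibres : ∀ b, Nat.card (φ ⁻¹' {b}) ≤ q := fun b =>
    (Nat.card_le_card_of_injective (fun x : φ ⁻¹' {b} => (⟨x.1.1, x.2⟩ : blk ⁻¹' {b}))
      fun x y hxy => Subtype.ext (Subtype.ext (Subtype.ext_iff.1 hxy :))).trans (hblk b)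
  calc Nat.card H.verts ≤ q * Nat.card (Set.range φ) := Nat.card_le_mul_card_range φ hfibres
    _ ≤ q * (C.card + 1) := by
        gcongr
        exact (hH.coe.card_range_le_card_edgeSet_map_add_one φ).trans
          (Nat.add_le_add_right ((H.coe.map φ).card_edgeSet_le_of_injOn hc hcolours) 1)
    _ ≤ (s + 1) * q := by rw [mul_comm]; gcongr

theorem stmt_17 (n r s k : ℕ) (hn : 2 ≤ n) (hr : 1 ≤ r) :
    ∃ f : Sym2 (Fin n) → Fin r,
      ∀ H : (⊤ : SimpleGraph (Fin n)).Subgraph, H.Connected →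
        (∃ C : Finset (Fin r), C.card ≤ s ∧ ∀ e ∈ H.edgeSet, f e ∈ C) →
        Nat.card H.verts ≤
          (s + 1) * ((n + Nat.sqrt (2 * r) - 1) / Nat.sqrt (2 * r)) :=
  stmt_17_general n r s hr
end
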